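/- The number of digitally convex sets of the Cartesian product P_n □ P_2 satisfies n_D(P_1 □ P_2) = 2, n_D(P_2 □ P_2) = 6, n_D(P_3 □ P_2) = 16, and for every integer n ≥ 4, n_D(P_n □ P_2) = n_D(P_{n−1} □ P_2) + 3·n_D(P_{n−2} □ P_2) + 2·n_D(P_{n−3} □ P_2). -/

import Mathlib

open SimpleGraph

/-- `N[S]`: the union of closed neighbourhoods of the vertices of `S`. -/
def closedNbhd {V : Type*} (G : SimpleGraph V) (S : Set V) : Set V :=
  ⋃ v ∈ S, insert v (G.neighborSet v)

/-- A set `S` is digitally convex in `G` if every vertex `v` with `N[v] ⊆ N[S]`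
belongs to `S`. -/
def DigConvex {V : Type*} (G : SimpleGraph V) (S : Set V) : Prop :=
  ∀ v : V, insert v (G.neighborSet v) ⊆ closedNbhd G S → v ∈ S

/-- `n_D(G)`: the number of digitally convex sets of `G`. -/
noncomputable def nD {V : Type*} (G : SimpleGraph V) : ℕ :=
  Nat.card {S : Set V // DigConvex G S}

/-- The path graph `P_n` on vertices `{0, 1, …, n-1}`, with `i` adjacent to `i+1`. -/
def pathG (n : ℕ) : SimpleGraph (Fin n) :=
  SimpleGraph.fromRel (fun i j => (i : ℕ) + 1 = (j : ℕ))

/-!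
A set `S` of vertices of the ladder `P_n □ P_2` is digitally convex iff every vertex outside `S`
has a closed neighbour outside `N[S]`. Whether a vertex lies outside `N[S]` depends only on its own
column and the two adjacent ones, so the condition at a column depends only on the two columns on
either side of it. Reading the ladder column by column, digitally convex sets are therefore the
words accepted by a finite automaton whose state is the last four columns read. For every state,
the number of accepted words of length `n + 4` satisfies the recurrence as soon as it does for
`n = 0` at every state reachable in one step, and that is a finite computation.
-/

section Automaton

variable {σ α : Type*} [Fintype α] (δ : σ → α → σ) (accept : σ → Bool)

def countAccepted : ℕ → σ → ℕ
  | 0, q => (accept q).toNat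
  | n + 1, q => ∑ x, countAccepted n (δ q x)

theorem card_accepted (n : ℕ) (q : σ) :
    Nat.card {w : Fin n → α // accept ((List.ofFn w).foldl δ q)} =
      countAccepted δ accept n q := by
  induction n generalizing q with
  | zero => cases h : accept q <;> simp [countAccepted, h]
  | succ n ih =>
    let e : {w : Fin (n + 1) → α // accept ((List.ofFn w).foldl δ q)} ≃
        Σ x, {w : Fin n → α // accept ((List.ofFn w).foldl δ (δ q x))} :=
      ((Fin.consEquiv fun _ => α).symm.subtypeEquiv fun w => by
          simp [Fin.consEquiv, Fin.tail_def, List.ofFn_succ]).trans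
        (Equiv.subtypeProdEquivSigmaSubtype fun x w =>
          accept ((List.ofFn w).foldl δ (δ q x)) = true)
    simp only [Nat.card_congr e, Nat.card_sigma, ih, countAccepted]

theorem countAccepted_eq_zero_of_dead {q : σ} (hδ : ∀ x, δ q x = q) (hq : accept q = false)
    (n : ℕ) : countAccepted δ accept n q = 0 := by
  induction n with
  | zero => simp [countAccepted, hq]
  | succ n ih => simp [countAccepted, hδ, ih]

variable {δ accept} {a b c : ℕ}

theorem countAccepted_add_four_of_step {m : ℕ} {q : σ}
    (h : ∀ x, countAccepted δ accept (m + 3) (δ q x) =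
      a * countAccepted δ accept (m + 2) (δ q x) + b * countAccepted δ accept (m + 1) (δ q x) +
        c * countAccepted δ accept m (δ q x)) :
    countAccepted δ accept (m + 4) q = a * countAccepted δ accept (m + 3) q +
      b * countAccepted δ accept (m + 2) q + c * countAccepted δ accept (m + 1) q := by
  show ∑ x, countAccepted δ accept (m + 3) (δ q x) =
    a * ∑ x, countAccepted δ accept (m + 2) (δ q x) +
      b * ∑ x, countAccepted δ accept (m + 1) (δ q x) +
        c * ∑ x, countAccepted δ accept m (δ q x)
  simp only [h, Finset.mul_sum, Finset.sum_add_distrib]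

theorem countAccepted_add_four
    (h : ∀ q x, countAccepted δ accept 3 (δ q x) = a * countAccepted δ accept 2 (δ q x) +
      b * countAccepted δ accept 1 (δ q x) + c * countAccepted δ accept 0 (δ q x))
    (n : ℕ) (q : σ) :
    countAccepted δ accept (n + 4) q = a * countAccepted δ accept (n + 3) q +
      b * countAccepted δ accept (n + 2) q + c * countAccepted δ accept (n + 1) q := by
  induction n generalizing q with
  | zero => exact countAccepted_add_four_of_step (h q)
  | succ n ih => exact countAccepted_add_four_of_step fun x => ih (δ q x)

end Automaton

theorem notMem_closedNbhd_iff {V : Type*} (G : SimpleGraph V) {S : Set V} {u : V} :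
    u ∉ closedNbhd G S ↔ ∀ w, (w = u ∨ G.Adj u w) → w ∉ S := by
  simp only [closedNbhd, Set.mem_iUnion, Set.mem_insert_iff, mem_neighborSet, exists_prop,
    not_exists, not_and]
  exact forall_congr' fun w => by rw [G.adj_comm, eq_comm (a := u)]; tauto

theorem digConvex_iff {V : Type*} (G : SimpleGraph V) {S : Set V} :
    DigConvex G S ↔ ∀ v, v ∈ S ∨ ∃ u, (u = v ∨ G.Adj v u) ∧ u ∉ closedNbhd G S := by
  simp only [DigConvex, Set.subset_def, Set.mem_insert_iff, mem_neighborSet]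
  exact forall_congr' fun v => by by_cases hv : v ∈ S <;> simp [hv, imp_iff_not_or]

theorem pathG_adj {n : ℕ} {a b : Fin n} :
    (pathG n).Adj a b ↔ (a : ℕ) + 1 = b ∨ (b : ℕ) + 1 = a := by
  simp only [pathG, fromRel_adj, ne_eq, and_iff_right_iff_imp]
  rintro h rfl
  omega

theorem pathG_two_adj {a b : Fin 2} : (pathG 2).Adj a b ↔ b = a.rev := by
  rw [pathG_adj]
  fin_cases a <;> fin_cases b <;> decide

abbrev ladder (n : ℕ) : SimpleGraph (Fin n × Fin 2) := pathG n □ pathG 2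

theorem ladder_eq_or_adj_iff {n : ℕ} {v w : Fin n × Fin 2} :
    (w = v ∨ (ladder n).Adj v w) ↔
      w.2 = v.2 ∧ (v.1 : ℤ) - 1 ≤ w.1 ∧ (w.1 : ℤ) ≤ v.1 + 1 ∨ w.1 = v.1 ∧ w.2 = v.2.rev := by
  obtain ⟨⟨i, hi⟩, j⟩ := v
  obtain ⟨⟨k, hk⟩, l⟩ := w
  simp only [boxProd_adj, pathG_adj, Prod.mk.injEq, Fin.mk.injEq]
  fin_cases j <;> fin_cases l <;> simp <;> omega

section Padding

variable {α : Type*} {n : ℕ}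

def pad (c : Fin n → α) (k : ℤ) : Option α :=
  if h : 0 ≤ k ∧ k < n then some (c ⟨k.toNat, by omega⟩) else none

theorem pad_eq_some_iff {c : Fin n → α} {k : ℤ} {a : α} :
    pad c k = some a ↔ ∃ i : Fin n, (i : ℤ) = k ∧ c i = a := by
  unfold pad
  split_ifs with h
  · refine ⟨fun ha => ⟨_, by simp; omega, Option.some_injective _ ha⟩, ?_⟩
    rintro ⟨i, rfl, rfl⟩
    simp
  · simp only [false_iff, not_exists, not_and]
    rintro i rfl
    omega

theorem pad_coe (c : Fin n → α) (i : Fin n) : pad c i = some (c i) :=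
  pad_eq_some_iff.2 ⟨i, rfl, rfl⟩

theorem pad_eq_none {c : Fin n → α} {k : ℤ} (hk : k < 0 ∨ n ≤ k) : pad c k = none :=
  dif_neg (by omega)

theorem pad_init (c : Fin (n + 1) → α) {k : ℤ} (hk : k < n) : pad (Fin.init c) k = pad c k := by
  unfold pad
  by_cases h : 0 ≤ k
  · rw [dif_pos ⟨h, hk⟩, dif_pos ⟨h, by omega⟩]
    rfl
  · rw [dif_neg (by omega), dif_neg (by omega)]

theorem pad_last (c : Fin (n + 1) → α) : pad c n = some (c (Fin.last n)) :=
  pad_coe c (Fin.last n)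

theorem any_pad_eq_false_iff {c : Fin n → α} {k : ℤ} {p : α → Bool} :
    (pad c k).any p = false ↔ ∀ i : Fin n, (i : ℤ) = k → p (c i) = false := by
  cases h : pad c k with
  | none =>
    simp only [Option.any_none, true_iff]
    rintro i rfl
    simp [pad_coe] at h
  | some a =>
    obtain ⟨i, rfl, rfl⟩ := pad_eq_some_iff.1 h
    simp only [Option.any_some]
    refine ⟨fun h' i' hi' => ?_, fun h' => h' i rfl⟩
    obtain rfl : i' = i := Fin.ext (by omega)
    exact h'

end Padding

def cellsOf {α β : Type*} (c : α → β → Bool) : Set (α × β) := {v | c v.1 v.2}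

open scoped Classical in
noncomputable def cellsEquiv (α β : Type*) : (α → β → Bool) ≃ Set (α × β) where
  toFun := cellsOf
  invFun S a b := decide ((a, b) ∈ S)
  left_inv c := by funext a b; cases h : c a b <;> simp [cellsOf, h]
  right_inv S := by ext; simp [cellsOf]

namespace Ladder

abbrev Column := Fin 2 → Bool

variable {n : ℕ}

theorem notMem_closedNbhd_cellsOf_iff {c : Fin n → Column} {k : Fin n} {l : Fin 2} :
    (k, l) ∉ closedNbhd (ladder n) (cellsOf c) ↔
      c k l = false ∧ c k l.rev = false ∧
        ∀ i : Fin n, (i : ℤ) = k - 1 ∨ (i : ℤ) = k + 1 → c i l = false := by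
  simp only [notMem_closedNbhd_iff, ladder_eq_or_adj_iff, cellsOf, Set.mem_ofPred_eq,
    Bool.not_eq_true, Prod.forall]
  refine ⟨fun h => ⟨h k l (by simp), h k l.rev (by simp), fun i hi => h i l (by omega)⟩, ?_⟩
  rintro ⟨h₀, h₁, h₂⟩ i j (⟨rfl, hi⟩ | ⟨rfl, rfl⟩)
  · rcases lt_trichotomy (i : ℤ) k with hik | hik | hik
    · exact h₂ i (by omega)
    · obtain rfl : i = k := Fin.ext (by omega)
      exact h₀
    · exact h₂ i (by omega)
  · exact h₁

/-- Whether row `l` of the middle column lies outside `N[S]`, read off the middle column and its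
two neighbours; `none` stands for a column beyond the end of the ladder. -/
def isFree : Option Column → Option Column → Option Column → Fin 2 → Bool
  | _, none, _, _ => false
  | a, some d, b, l => !d l && !d l.rev && !a.any (· l) && !b.any (· l)

theorem isFree_pad_iff (c : Fin n → Column) {K K₁ K₂ : ℤ} (h₁ : K₁ = K - 1) (h₂ : K₂ = K + 1)
    (l : Fin 2) :
    isFree (pad c K₁) (pad c K) (pad c K₂) l ↔
      ∃ k : Fin n, (k : ℤ) = K ∧ (k, l) ∉ closedNbhd (ladder n) (cellsOf c) := by
  subst h₁ h₂
  cases h : pad c K with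
  | none =>
    simp only [isFree, Bool.false_eq_true, false_iff, not_exists, not_and]
    rintro k rfl
    simp [pad_coe] at h
  | some d =>
    obtain ⟨k, rfl, rfl⟩ := pad_eq_some_iff.1 h
    simp only [isFree, Bool.and_eq_true, Bool.not_eq_true', any_pad_eq_false_iff,
      notMem_closedNbhd_cellsOf_iff]
    constructor
    · rintro ⟨⟨⟨h₀, h₁⟩, h₂⟩, h₃⟩
      exact ⟨k, rfl, h₀, h₁, fun i hi => hi.elim (h₂ i) (h₃ i)⟩
    · rintro ⟨k', hk', h₀, h₁, h₂⟩
      obtain rfl : k' = k := Fin.ext (by omega)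
      exact ⟨⟨⟨h₀, h₁⟩, fun i hi => h₂ i (.inl hi)⟩, fun i hi => h₂ i (.inr hi)⟩

theorem exists_notMem_closedNbhd_iff {c : Fin n → Column} {p : Fin n} {j : Fin 2} :
    (∃ u, (u = (p, j) ∨ (ladder n).Adj (p, j) u) ∧ u ∉ closedNbhd (ladder n) (cellsOf c)) ↔
      (∃ k : Fin n, (k : ℤ) = p - 1 ∧ (k, j) ∉ closedNbhd (ladder n) (cellsOf c)) ∨
      (∃ k : Fin n, (k : ℤ) = p ∧ (k, j) ∉ closedNbhd (ladder n) (cellsOf c)) ∨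
      (∃ k : Fin n, (k : ℤ) = p ∧ (k, j.rev) ∉ closedNbhd (ladder n) (cellsOf c)) ∨
      (∃ k : Fin n, (k : ℤ) = p + 1 ∧ (k, j) ∉ closedNbhd (ladder n) (cellsOf c)) := by
  simp only [ladder_eq_or_adj_iff, Prod.exists]
  constructor
  · rintro ⟨k, l, ⟨rfl, hk⟩ | ⟨rfl, rfl⟩, hu⟩
    · obtain hk | hk | hk : (k : ℤ) = p - 1 ∨ (k : ℤ) = p ∨ (k : ℤ) = p + 1 := by omega
      exacts [.inl ⟨k, hk, hu⟩, .inr (.inl ⟨k, hk, hu⟩), .inr (.inr (.inr ⟨k, hk, hu⟩))]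
    · exact .inr (.inr (.inl ⟨_, rfl, hu⟩))
  · rintro (⟨k, hk, hu⟩ | ⟨k, hk, hu⟩ | ⟨k, hk, hu⟩ | ⟨k, hk, hu⟩)
    · exact ⟨k, j, .inl ⟨rfl, by omega, by omega⟩, hu⟩
    · exact ⟨k, j, .inl ⟨rfl, by omega, by omega⟩, hu⟩
    · exact ⟨k, j.rev, .inr ⟨Fin.ext (by omega), rfl⟩, hu⟩
    · exact ⟨k, j, .inl ⟨rfl, by omega, by omega⟩, hu⟩

/-- Whether every cell of the middle column `d` is in `S` or has a closed neighbour outside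
`N[S]`, read off the two columns on either side of `d`. -/
def windowOK : Option Column → Option Column → Option Column → Option Column → Option Column →
    Bool
  | _, _, none, _, _ => true
  | a, b, some d, e, f => decide (∀ j : Fin 2, d j ∨ isFree a b (some d) j ∨
      isFree b (some d) e j ∨ isFree b (some d) e j.rev ∨ isFree (some d) e f j)

def windowAt (c : Fin n → Column) (k : ℤ) : Bool :=
  windowOK (pad c (k - 2)) (pad c (k - 1)) (pad c k) (pad c (k + 1)) (pad c (k + 2))

theorem windowAt_coe_iff (c : Fin n → Column) (p : Fin n) :
    windowAt c p ↔ ∀ j, (p, j) ∈ cellsOf c ∨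
      ∃ u, (u = (p, j) ∨ (ladder n).Adj (p, j) u) ∧ u ∉ closedNbhd (ladder n) (cellsOf c) := by
  have hp := pad_coe c p
  simp only [windowAt, hp, windowOK, decide_eq_true_iff]
  refine forall_congr' fun j => ?_
  rw [← hp, isFree_pad_iff c (K := p - 1) (by ring) (by ring),
    isFree_pad_iff c (K := p) rfl rfl, isFree_pad_iff c (K := p) rfl rfl,
    isFree_pad_iff c (K := p + 1) (by ring) (by ring)]
  simp only [exists_notMem_closedNbhd_iff]
  rfl

theorem windowAt_of_lt_or_le (c : Fin n → Column) {k : ℤ} (hk : k < 0 ∨ n ≤ k) :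
    windowAt c k := by
  simp [windowAt, pad_eq_none hk, windowOK]

theorem digConvex_cellsOf_iff (c : Fin n → Column) :
    DigConvex (ladder n) (cellsOf c) ↔ ∀ k : ℤ, windowAt c k := by
  rw [digConvex_iff, Prod.forall]
  refine ⟨fun h k => ?_, fun h p => (windowAt_coe_iff c p).1 (h p)⟩
  by_cases hk : 0 ≤ k ∧ k < n
  · lift k to ℕ using hk.1
    exact (windowAt_coe_iff c ⟨k, by omega⟩).2 (h _)
  · exact windowAt_of_lt_or_le c (by omega)

/-- The last four columns read so far, or `none` once some window has failed. -/
abbrev State := Option (Option Column × Option Column × Option Column × Option Column)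

def step : State → Column → State
  | none, _ => none
  | some (a, b, d, e), x => if windowOK a b d e (some x) then some (b, d, e, some x) else none

def accepts : State → Bool
  | none => false
  | some (a, b, d, e) => windowOK a b d e none && windowOK b d e none none

def start : State := some (none, none, none, none)

theorem windowAt_init (c : Fin (n + 1) → Column) {k : ℤ} (hk : k + 3 ≤ n) :
    windowAt (Fin.init c) k = windowAt c k := by
  unfold windowAt
  congr 1 <;> exact pad_init c (by omega)

theorem forall_windowAt_succ_iff (c : Fin (n + 1) → Column) :
    (∀ k : ℤ, k + 3 ≤ ↑(n + 1) → windowAt c k) ↔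
      (∀ k : ℤ, k + 3 ≤ n → windowAt (Fin.init c) k) ∧ windowAt c (n - 2) := by
  refine ⟨fun h => ⟨fun k hk => ?_, h _ (by omega)⟩, fun ⟨h, hw⟩ k hk => ?_⟩
  · rw [windowAt_init c hk]
    exact h k (by omega)
  · obtain hk | rfl : k + 3 ≤ n ∨ k = n - 2 := by omega
    · rw [← windowAt_init c hk]
      exact h k hk
    · exact hw

open scoped Classical in
theorem foldl_step_start (c : Fin n → Column) :
    (List.ofFn c).foldl step start =
      if ∀ k : ℤ, k + 3 ≤ n → windowAt c k then
        some (pad c (n - 4), pad c (n - 3), pad c (n - 2), pad c (n - 1))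
      else none := by
  induction n with
  | zero =>
    rw [if_pos fun k _ => windowAt_of_lt_or_le c (by omega)]
    simp [start, pad_eq_none]
  | succ n ih =>
    have hwin : windowAt c (n - 2) = windowOK (pad c (n - 4)) (pad c (n - 3)) (pad c (n - 2))
        (pad c (n - 1)) (some (c (Fin.last n))) := by
      rw [← pad_last, windowAt]
      ring_nf
    have hP := forall_windowAt_succ_iff c
    rw [List.ofFn_succ', List.concat_eq_append, List.foldl_concat,
      show (fun i => c i.castSucc) = Fin.init c from rfl, ih]
    by_cases h' : ∀ k : ℤ, k + 3 ≤ n → windowAt (Fin.init c) k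
    · simp only [if_pos h', pad_init c (by omega : (n : ℤ) - 1 < n),
        pad_init c (by omega : (n : ℤ) - 2 < n), pad_init c (by omega : (n : ℤ) - 3 < n),
        pad_init c (by omega : (n : ℤ) - 4 < n), step, ← hwin]
      by_cases hw : windowAt c (n - 2)
      · rw [if_pos hw, if_pos (hP.2 ⟨h', hw⟩), ← pad_last]
        push_cast
        ring_nf
      · rw [if_neg hw, if_neg fun h => hw (hP.1 h).2]
    · rw [if_neg h', if_neg fun h => h' (hP.1 h).1]
      rfl

theorem accepts_foldl_start_iff (c : Fin n → Column) :
    accepts ((List.ofFn c).foldl step start) ↔ ∀ k : ℤ, windowAt c k := by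
  rw [foldl_step_start]
  split_ifs with h
  · have hlast : accepts (some (pad c (n - 4), pad c (n - 3), pad c (n - 2), pad c (n - 1))) =
        (windowAt c (n - 2) && windowAt c (n - 1)) := by
      simp only [accepts, windowAt]
      ring_nf
      rw [pad_eq_none (k := n) (by omega), pad_eq_none (k := 1 + n) (by omega)]
    rw [hlast, Bool.and_eq_true]
    refine ⟨fun ⟨h₂, h₁⟩ k => ?_, fun h' => ⟨h' _, h' _⟩⟩
    obtain hk | rfl | rfl | hk : k + 3 ≤ n ∨ k = n - 2 ∨ k = n - 1 ∨ n ≤ k := by omega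
    exacts [h k hk, h₂, h₁, windowAt_of_lt_or_le c (.inr hk)]
  · simp only [accepts, Bool.false_eq_true, false_iff]
    exact fun h' => h fun k _ => h' k

theorem nD_ladder_eq (n : ℕ) : nD (ladder n) = countAccepted step accepts n start := by
  rw [← card_accepted]
  exact Nat.card_congr ((cellsEquiv (Fin n) (Fin 2)).subtypeEquiv fun c =>
    (accepts_foldl_start_iff c).trans (digConvex_cellsOf_iff c).symm).symm

theorem countAccepted_three_after_step (b d e : Option Column) (x : Column) :
    countAccepted step accepts 3 (some (b, d, e, some x)) =
      countAccepted step accepts 2 (some (b, d, e, some x)) +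
        3 * countAccepted step accepts 1 (some (b, d, e, some x)) +
          2 * countAccepted step accepts 0 (some (b, d, e, some x)) := by
  revert b d e x
  decide +kernel

theorem countAccepted_three_step (q : State) (x : Column) :
    countAccepted step accepts 3 (step q x) = countAccepted step accepts 2 (step q x) +
      3 * countAccepted step accepts 1 (step q x) + 2 * countAccepted step accepts 0 (step q x) := by
  have hdead := countAccepted_eq_zero_of_dead step accepts (q := none) (fun _ => rfl) rfl
  rcases q with _ | ⟨_, b, d, e⟩
  · simp only [step, hdead]
  · simp only [step]
    split_ifs
    · exact countAccepted_three_after_step b d e x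
    · simp only [hdead]

end Ladder

theorem nD_path_boxProd_P2 :
    nD (pathG 1 □ pathG 2) = 2 ∧ nD (pathG 2 □ pathG 2) = 6 ∧
      nD (pathG 3 □ pathG 2) = 16 ∧
      ∀ n : ℕ, 4 ≤ n →
        nD (pathG n □ pathG 2) =
          nD (pathG (n - 1) □ pathG 2) + 3 * nD (pathG (n - 2) □ pathG 2)
            + 2 * nD (pathG (n - 3) □ pathG 2) := by
  simp only [Ladder.nD_ladder_eq]
  refine ⟨by decide, by decide, by decide, fun n hn => ?_⟩
  obtain ⟨m, rfl⟩ : ∃ m, n = m + 4 := ⟨n - 4, by omega⟩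
  simpa using countAccepted_add_four (a := 1) (by simpa using Ladder.countAccepted_three_step)
    m Ladder.start
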